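/- arXiv:2211.11173 — 2 statements merged into one kernel-verified Lean document; each statement's English description precedes it below -/
import Mathlib

section
/- Let covers : Fin n → Fin n → Prop be a relation such that there is a strict linear order < on Fin n (by drop-off time) with covers i j → i < j. Given a matching M : set of pairs (i, j) with covers i j, where no index appears twice as a first coordinate and no index appears twice as a second coordinate, the functional graph of M decomposes Fin n into exactly n - |M| disjoint chains (trajectories), i.e., there exists a partition of Fin n into n - |M| lists, each list being a sequence i_1, ..., i_k with (i_s, i_{s+1}) ∈ M for all consecutive pairs. -/
/-!
Add the edges of `M` one at a time, starting from the `n` one-element chains. Since `M` is a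
matching, before the edge `(a, b)` is added no edge leaves `a` and none enters `b`, so `a` ends
its chain and `b` starts its chain; gluing the two chains merges them into one, and `|M|` edges
leave `n - |M|` chains. The two chains are distinct because edges increase in the strict
order, so a chain beginning at `b` cannot contain `a < b`.
-/

namespace List

variable {α : Type*} {R : α → α → Prop}

theorem IsChain.head?_eq_of_forall_not_rel {b : α} :
    ∀ {l : List α}, l.IsChain R → b ∈ l → (∀ c, ¬ R c b) → l.head? = some b
  | [], _, hb, _ => absurd hb not_mem_nil
  | [_], _, hb, _ => by simp_all
  | x :: y :: t, h, hb, hnot => by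
    rcases mem_cons.1 hb with rfl | hb
    · rfl
    · have hy : y = b := by simpa using h.tail.head?_eq_of_forall_not_rel hb hnot
      exact absurd (isChain_cons_cons.1 h).1 (hy ▸ hnot x)

theorem IsChain.getLast?_eq_of_forall_not_rel {a : α} {l : List α} (h : l.IsChain R)
    (ha : a ∈ l) (hnot : ∀ c, ¬ R a c) : l.getLast? = some a := by
  rw [← head?_reverse]
  exact (isChain_reverse.2 h).head?_eq_of_forall_not_rel (mem_reverse.2 ha) hnot

theorem IsChain.le_of_head?_eq_of_mem [Preorder α] {a b : α} {l : List α}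
    (h : l.IsChain (· < ·)) (hb : l.head? = some b) (ha : a ∈ l) : b ≤ a := by
  obtain ⟨t, rfl⟩ : ∃ t, l = b :: t := by
    cases l <;> simp_all
  rcases mem_cons.1 ha with rfl | ha
  · exact le_rfl
  · exact (rel_of_pairwise_cons h.pairwise ha).le

theorem exists_perm_cons_cons {β : Type*} {L : List β} {x y : β} (hx : x ∈ L) (hy : y ∈ L)
    (hne : x ≠ y) : ∃ L', L.Perm (x :: y :: L') := by
  classical
  exact ⟨(L.erase x).erase y, (perm_cons_erase hx).trans
    ((perm_cons_erase ((mem_erase_of_ne hne.symm).2 hy)).cons x)⟩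

end List

open List

section ChainPartition

variable {α : Type*} {R S : α → α → Prop}

def IsChainPartition (R : α → α → Prop) (L : List (List α)) (u : List α) : Prop :=
  (∀ l ∈ L, l.IsChain R) ∧ L.flatten.Perm u

theorem isChainPartition_singletons (R : α → α → Prop) (u : List α) :
    IsChainPartition R (u.map fun x => [x]) u := by
  refine ⟨by simp, ?_⟩
  induction u <;> simp_all

namespace IsChainPartition

variable {L L' : List (List α)} {u : List α}

theorem mono (h : IsChainPartition R L u) (hRS : ∀ ⦃a b⦄, R a b → S a b) :
    IsChainPartition S L u :=
  ⟨fun l hl => (h.1 l hl).imp hRS, h.2⟩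

theorem perm (h : IsChainPartition R L u) (hL : L.Perm L') : IsChainPartition R L' u :=
  ⟨fun l hl => h.1 l (hL.symm.subset hl), hL.symm.flatten.trans h.2⟩

theorem exists_mem_iff (h : IsChainPartition R L u) {x : α} :
    (∃ l ∈ L, x ∈ l) ↔ x ∈ u := by
  rw [← mem_flatten]
  exact h.2.mem_iff

theorem glue {la lb : List α} {a b : α} (h : IsChainPartition R (la :: lb :: L) u)
    (ha : la.getLast? = some a) (hb : lb.head? = some b) (hab : R a b) :
    IsChainPartition R ((la ++ lb) :: L) u := by
  refine ⟨?_, by simpa only [flatten_cons, append_assoc] using h.2⟩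
  intro l hl
  rcases mem_cons.1 hl with rfl | hl
  · refine (h.1 la (by simp)).append (h.1 lb (by simp)) ?_
    simp_all
  · exact h.1 l (mem_cons_of_mem _ (mem_cons_of_mem _ hl))

end IsChainPartition

end ChainPartition

theorem exists_isChainPartition_of_injOn {α : Type*} [Preorder α] (u : List α)
    (M : Finset (α × α)) (hu : ∀ e ∈ M, e.1 ∈ u ∧ e.2 ∈ u)
    (hlt : ∀ e ∈ M, e.1 < e.2)
    (hfst : Set.InjOn Prod.fst (M : Set (α × α)))
    (hsnd : Set.InjOn Prod.snd (M : Set (α × α))) :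
    ∃ L, IsChainPartition (fun a b => (a, b) ∈ M) L u ∧ L.length + M.card = u.length := by
  classical
  induction M using Finset.induction_on with
  | empty => exact ⟨_, isChainPartition_singletons _ u, by simp⟩
  | @insert e M heM ih =>
    obtain ⟨a, b⟩ := e
    have hsub : (M : Set (α × α)) ⊆ ↑(insert (a, b) M) := by simp
    obtain ⟨L, hL, hlen⟩ := ih (fun e he => hu e (by simp [he]))
      (fun e he => hlt e (by simp [he])) (hfst.mono hsub) (hsnd.mono hsub)
    obtain ⟨hau, hbu⟩ := hu (a, b) (by simp)
    obtain ⟨la, hlaL, hala⟩ := hL.exists_mem_iff.2 hau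
    obtain ⟨lb, hlbL, hblb⟩ := hL.exists_mem_iff.2 hbu
    have hlast : la.getLast? = some a := (hL.1 la hlaL).getLast?_eq_of_forall_not_rel hala
      fun _ hc => heM
        (hfst (Finset.mem_insert_of_mem hc) (Finset.mem_insert_self _ _) rfl ▸ hc)
    have hhead : lb.head? = some b := (hL.1 lb hlbL).head?_eq_of_forall_not_rel hblb
      fun _ hc => heM
        (hsnd (Finset.mem_insert_of_mem hc) (Finset.mem_insert_self _ _) rfl ▸ hc)
    have hab : a < b := hlt (a, b) (by simp)
    have hne : la ≠ lb := by
      rintro rfl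
      have hlt' : la.IsChain (· < ·) :=
        (hL.1 la hlaL).imp fun x y hxy => hlt (x, y) (by simp [hxy])
      exact hab.not_ge (hlt'.le_of_head?_eq_of_mem hhead hala)
    obtain ⟨L', hperm⟩ := exists_perm_cons_cons hlaL hlbL hne
    refine ⟨(la ++ lb) :: L', ?_, ?_⟩
    · exact ((hL.perm hperm).mono fun x y hxy => by simp [hxy]).glue hlast hhead (by simp)
    · simp only [hperm.length_eq, length_cons] at hlen ⊢
      rw [Finset.card_insert_of_notMem heM]
      omega

/-- A matching `M` (with respect to an order-respecting relation `covers`)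
decomposes `Fin n` into exactly `n - |M|` chains whose consecutive pairs are
edges of `M`. -/
theorem stmt_4 (n : ℕ) (covers : Fin n → Fin n → Prop)
    (hlt : ∀ i j, covers i j → i < j)
    (M : Finset (Fin n × Fin n)) (hMcov : ∀ e ∈ M, covers e.1 e.2)
    (hM1 : ∀ e ∈ M, ∀ e' ∈ M, e.1 = e'.1 → e = e')
    (hM2 : ∀ e ∈ M, ∀ e' ∈ M, e.2 = e'.2 → e = e') :
    ∃ L : List (List (Fin n)), L.length = n - M.card ∧
      (∀ l ∈ L, l.Chain' (fun a b => (a, b) ∈ M)) ∧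
      L.flatten.Perm (List.finRange n) := by
  obtain ⟨L, ⟨hchain, hperm⟩, hlen⟩ := exists_isChainPartition_of_injOn (List.finRange n) M
    (fun e _ => ⟨mem_finRange _, mem_finRange _⟩) (fun e he => hlt _ _ (hMcov e he))
    (fun e he e' he' => hM1 e he e' he') (fun e he e' he' => hM2 e he e' he')
  rw [length_finRange] at hlen
  exact ⟨L, by omega, hchain, hperm⟩
end

section
/- Let covers : Fin n → Fin n → Prop with covers i j → i < j. Suppose I_D, I_P ⊆ Fin n are such that for all i ∈ I_D and j ∈ I_P, ¬covers i j (i.e., I_D ∪ I_P viewed in the bipartite graph is independent), and |I_D| + |I_P| = n + k. Then there is a set K ⊆ Fin n with |K| = k, K ⊆ I_D ∩ I_P, and for all distinct i, j ∈ K, ¬covers i j and ¬covers j i. -/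
/- Inclusion–exclusion: `|I_D ∩ I_P| = |I_D| + |I_P| - |I_D ∪ I_P| ≥ (n + k) - n = k`, so some
`k` indices lie on both sides. An index `i` of `I_D ∩ I_P` is a drop-off vertex and a pickup vertex
at once, so independence rules out `covers i j` and `covers j i` for any two such indices. -/

open Finset

theorem Finset.card_add_card_le_card_inter_add_card_univ {α : Type*} [Fintype α] [DecidableEq α]
    (s t : Finset α) : #s + #t ≤ #(s ∩ t) + Fintype.card α := by
  rw [← card_inter_add_card_union]
  exact Nat.add_le_add_left (card_le_univ _) _

theorem Finset.exists_subset_inter_card_eq {α : Type*} [Fintype α] [DecidableEq α]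
    {s t : Finset α} {k : ℕ} (h : #s + #t = Fintype.card α + k) :
    ∃ K ⊆ s ∩ t, #K = k :=
  exists_subset_card_eq <| by
    have := card_add_card_le_card_inter_add_card_univ s t
    omega

theorem stmt_9_general (n k : ℕ) (covers : Fin n → Fin n → Prop)
    (ID IP : Finset (Fin n)) (hind : ∀ i ∈ ID, ∀ j ∈ IP, ¬covers i j)
    (hcard : ID.card + IP.card = n + k) :
    ∃ K : Finset (Fin n), K.card = k ∧ K ⊆ ID ∩ IP ∧
      ∀ i ∈ K, ∀ j ∈ K, i ≠ j → ¬covers i j ∧ ¬covers j i := by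
  obtain ⟨K, hK, hKcard⟩ := exists_subset_inter_card_eq (by rwa [Fintype.card_fin])
  refine ⟨K, hKcard, hK, fun i hi j hj _ => ?_⟩
  obtain ⟨hiD, hiP⟩ := mem_inter.mp (hK hi)
  obtain ⟨hjD, hjP⟩ := mem_inter.mp (hK hj)
  exact ⟨hind i hiD j hjP, hind j hjD i hiP⟩

/-- An independent set of size `n + k` in the bipartite compatibility graph,
split into drop-off side `ID` and pickup side `IP`, yields `k` indices in both
sides which form a pairwise incompatible set of trips. -/
theorem stmt_9 (n k : ℕ) (covers : Fin n → Fin n → Prop)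
    (hlt : ∀ i j, covers i j → i < j)
    (ID IP : Finset (Fin n)) (hind : ∀ i ∈ ID, ∀ j ∈ IP, ¬covers i j)
    (hcard : ID.card + IP.card = n + k) :
    ∃ K : Finset (Fin n), K.card = k ∧ K ⊆ ID ∩ IP ∧
      ∀ i ∈ K, ∀ j ∈ K, i ≠ j → ¬covers i j ∧ ¬covers j i :=
  stmt_9_general n k covers ID IP hind hcard
end
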